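/- arXiv:1701.00443 — 5 statements merged into one kernel-verified Lean document; each statement's English description precedes it below -/
import Mathlib

section
/- Let Λ and Λ' be lattices in ℝ² and let Φ : ℝ² → ℝ² be an affine automorphism, Φ(x) = Ax + b, with Φ(Λ) ⊆ Λ', and set Λ'' := A(Λ) ⊆ Λ'. Then for every y ∈ ℝ² with y ∉ Λ', the preimage Φ⁻¹(Γ_{Λ'}·y) is a union of Γ_Λ-orbits, and the set of Γ_Λ-orbits contained in Φ⁻¹(Γ_{Λ'}·y) is finite with cardinality equal to the index of Λ'' in Λ'. -/
/-- The plane ℝ². -/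
abbrev V2 : Type := EuclideanSpace ℝ (Fin 2)

/-- `Λ` is a lattice in ℝ²: a discrete additive subgroup spanning ℝ². -/
def IsLattice (Λ : AddSubgroup V2) : Prop :=
  DiscreteTopology Λ ∧ Submodule.span ℝ (Λ : Set V2) = ⊤

/-- The `Γ_Λ`-orbit of `x`: the set `{2λ + x : λ ∈ Λ} ∪ {2λ − x : λ ∈ Λ}`. -/
def orbitG (Λ : AddSubgroup V2) (x : V2) : Set V2 :=
  {y : V2 | ∃ l ∈ Λ, y = (2:ℝ) • l + x ∨ y = (2:ℝ) • l - x}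

/-!
A point `y ∉ Λ'` is never fixed by a reflection `z ↦ 2λ' − z` of `Γ_{Λ'}`, so its orbit is the
disjoint union of the translates `2m + y` and `2m − y`, `m ∈ Λ'`. Since `Φ` intertwines `Γ_Λ`
with a subgroup of `Γ_{Λ'}`, the `Γ_Λ`-orbits in `Φ⁻¹(Γ_{Λ'}·y)` are those of the points
`Φ⁻¹(2m + y)`, and two such orbits agree exactly when `m ≡ m'` modulo `Λ'' = A(Λ)`. The index
is finite because `Λ''` is again a lattice: the ratio of covolumes computes it.
-/

theorem AddSubgroup.relIndex_ne_zero_of_span_eq_top {E : Type*} [NormedAddCommGroup E]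
    [InnerProductSpace ℝ E] [FiniteDimensional ℝ E] {H L : AddSubgroup E} [DiscreteTopology L]
    (hH : Submodule.span ℝ (H : Set E) = ⊤) (hHL : H ≤ L) : H.relIndex L ≠ 0 := by
  borelize E
  have : DiscreteTopology H :=
    DiscreteTopology.of_subset (inferInstanceAs (DiscreteTopology (L : Set E))) hHL
  have : DiscreteTopology (toIntSubmodule H) := ‹DiscreteTopology H›
  have : DiscreteTopology (toIntSubmodule L) := ‹DiscreteTopology L›
  have : IsZLattice ℝ (toIntSubmodule H) := ⟨hH⟩
  have : IsZLattice ℝ (toIntSubmodule L) := ⟨eq_top_mono (Submodule.span_mono hHL) hH⟩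
  have h := ZLattice.covolume_div_covolume_eq_relIndex' (toIntSubmodule H) (toIntSubmodule L) hHL
  intro h0
  simp only [toIntSubmodule_toAddSubgroup, h0, Nat.cast_zero] at h
  exact (div_pos (ZLattice.covolume_pos _ MeasureTheory.volume)
    (ZLattice.covolume_pos _ MeasureTheory.volume)).ne' h

theorem AddSubgroup.ncard_range_eq_index {G α : Type*} [AddGroup G] (K : AddSubgroup G)
    {f : G → α} (hf : ∀ a b, f a = f b ↔ -a + b ∈ K) : (Set.range f).ncard = K.index := by
  rw [← Nat.card_coe_set_eq, ← Nat.card_congr (Setoid.quotientKerEquivRange f)]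
  exact Nat.card_congr <| Quotient.congrRight fun a b =>
    (hf a b).trans (QuotientAddGroup.leftRel_apply).symm

namespace orbitG

variable {Λ Λ' : AddSubgroup V2} {x x' z : V2}

lemma mem_self (Λ : AddSubgroup V2) (x : V2) : x ∈ orbitG Λ x :=
  ⟨0, Λ.zero_mem, Or.inl (by simp)⟩

lemma neg_mem (Λ : AddSubgroup V2) (x : V2) : -x ∈ orbitG Λ x :=
  ⟨0, Λ.zero_mem, Or.inr (by simp)⟩

lemma mem_trans (hz : z ∈ orbitG Λ x') (hx' : x' ∈ orbitG Λ x) : z ∈ orbitG Λ x := by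
  obtain ⟨l', hl', hz⟩ := hz
  obtain ⟨l, hl, hx'⟩ := hx'
  rcases hz with hz | hz <;> rcases hx' with hx' | hx'
  · exact ⟨l' + l, Λ.add_mem hl' hl, Or.inl (by rw [hz, hx']; module)⟩
  · exact ⟨l' + l, Λ.add_mem hl' hl, Or.inr (by rw [hz, hx']; module)⟩
  · exact ⟨l' - l, Λ.sub_mem hl' hl, Or.inr (by rw [hz, hx']; module)⟩
  · exact ⟨l' - l, Λ.sub_mem hl' hl, Or.inl (by rw [hz, hx']; module)⟩

lemma mem_symm (h : x' ∈ orbitG Λ x) : x ∈ orbitG Λ x' := by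
  obtain ⟨l, hl, h | h⟩ := h
  · exact ⟨-l, Λ.neg_mem hl, Or.inl (by rw [h]; module)⟩
  · exact ⟨l, hl, Or.inr (by rw [h]; module)⟩

lemma eq_iff_mem : orbitG Λ x' = orbitG Λ x ↔ x' ∈ orbitG Λ x :=
  ⟨fun h => h ▸ mem_self Λ x', fun h => Set.ext fun _ =>
    ⟨fun hz => mem_trans hz h, fun hz => mem_trans hz (mem_symm h)⟩⟩

variable {A : V2 →ₗ[ℝ] V2} {b : V2}

lemma affine_mem_of_mem (hA : ∀ l ∈ Λ, A l ∈ Λ') (hb : b ∈ Λ') (h : x' ∈ orbitG Λ x) :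
    A x' + b ∈ orbitG Λ' (A x + b) := by
  obtain ⟨l, hl, h | h⟩ := h <;> subst h
  · exact ⟨A l, hA l hl, Or.inl (by rw [map_add, map_smul]; module)⟩
  · exact ⟨A l + b, Λ'.add_mem (hA l hl) hb, Or.inr (by rw [map_sub, map_smul]; module)⟩

lemma subset_preimage_of_affine_mem {y : V2} (hA : ∀ l ∈ Λ, A l ∈ Λ') (hb : b ∈ Λ')
    (hx : A x + b ∈ orbitG Λ' y) : orbitG Λ x ⊆ (fun x => A x + b) ⁻¹' orbitG Λ' y :=
  fun _ hz => mem_trans (affine_mem_of_mem hA hb hz) hx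

end orbitG

section preimage

open orbitG

variable {Λ Λ' : AddSubgroup V2} {A : V2 ≃ₗ[ℝ] V2} {b y : V2}

lemma setOf_orbitG_subset_preimage_eq_range (hA : ∀ l ∈ Λ, A l ∈ Λ') (hb : b ∈ Λ') :
    {O : Set V2 | (∃ x : V2, O = orbitG Λ x) ∧ O ⊆ (fun x => A x + b) ⁻¹' orbitG Λ' y} =
      Set.range fun m : Λ' => orbitG Λ (A.symm ((2 : ℝ) • (m : V2) + y - b)) := by
  ext O
  constructor
  · rintro ⟨⟨x, rfl⟩, hO⟩
    obtain ⟨m, hm, hx | hx⟩ := hO (mem_self Λ x)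
    · refine ⟨⟨m, hm⟩, congrArg (orbitG Λ) (A.symm_apply_eq.2 ?_)⟩
      linear_combination (norm := module) -hx
    · refine ⟨⟨b - m, Λ'.sub_mem hb hm⟩, eq_iff_mem.2 ?_⟩
      convert neg_mem Λ x using 1
      rw [A.symm_apply_eq, map_neg]
      linear_combination (norm := module) hx
  · rintro ⟨m, rfl⟩
    refine ⟨⟨_, rfl⟩, subset_preimage_of_affine_mem (A := A.toLinearMap) hA hb ?_⟩
    exact ⟨m, m.2, Or.inl (by simp)⟩

lemma orbitG_symm_eq_orbitG_symm_iff (hA : ∀ l ∈ Λ, A l ∈ Λ') (hb : b ∈ Λ') (hy : y ∉ Λ')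
    {m m' : V2} (hm : m ∈ Λ') (hm' : m' ∈ Λ') :
    orbitG Λ (A.symm ((2 : ℝ) • m + y - b)) = orbitG Λ (A.symm ((2 : ℝ) • m' + y - b)) ↔
      m' - m ∈ A '' (Λ : Set V2) := by
  rw [eq_comm, eq_iff_mem]
  constructor
  · rintro ⟨l, hl, h | h⟩
    · rw [A.symm_apply_eq, map_add, map_smul, A.apply_symm_apply] at h
      exact ⟨l, hl, by linear_combination (norm := module) (1 / 2 : ℝ) • h.symm⟩
    · rw [A.symm_apply_eq, map_sub, map_smul, A.apply_symm_apply] at h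
      have hy' : y = A l - m - m' + b := by linear_combination (norm := module) (1 / 2 : ℝ) • h
      exact absurd (hy' ▸ Λ'.add_mem (Λ'.sub_mem (Λ'.sub_mem (hA l hl) hm) hm') hb) hy
  · rintro ⟨l, hl, hml⟩
    refine ⟨l, hl, Or.inl ?_⟩
    rw [A.symm_apply_eq, map_add, map_smul, A.apply_symm_apply, hml]
    module

end preimage

/-- Let `Λ, Λ'` be lattices in ℝ², let `Φ(x) = A x + b` be an affine automorphism with
`Φ(Λ) ⊆ Λ'`, and let `Λ'' = A(Λ)` (realized as the additive subgroup `H ≤ Λ'`).  Then for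
every `y ∉ Λ'`, the preimage `Φ⁻¹(Γ_{Λ'}·y)` is a union of `Γ_Λ`-orbits, and the set of
`Γ_Λ`-orbits contained in it is finite, of cardinality the index of `Λ''` in `Λ'`. -/
theorem preimage_of_orbit_is_union_of_orbits
    (Λ Λ' : AddSubgroup V2) (hΛ : IsLattice Λ) (hΛ' : IsLattice Λ')
    (A : V2 ≃ₗ[ℝ] V2) (b : V2) (Φ : V2 → V2) (hΦ : Φ = fun x => A x + b)
    (hsub : Φ '' (Λ : Set V2) ⊆ (Λ' : Set V2))
    (H : AddSubgroup V2) (hH : (H : Set V2) = ⇑A '' (Λ : Set V2)) (hHle : H ≤ Λ')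
    (y : V2) (hy : y ∉ Λ') :
    (∀ x : V2, Φ x ∈ orbitG Λ' y → orbitG Λ x ⊆ Φ ⁻¹' (orbitG Λ' y)) ∧
    {O : Set V2 | (∃ x : V2, O = orbitG Λ x) ∧ O ⊆ Φ ⁻¹' (orbitG Λ' y)}.Finite ∧
    {O : Set V2 | (∃ x : V2, O = orbitG Λ x) ∧ O ⊆ Φ ⁻¹' (orbitG Λ' y)}.ncard
      = (H.addSubgroupOf Λ').index := by
  subst hΦ
  have hb : b ∈ Λ' := by simpa using hsub ⟨0, Λ.zero_mem, rfl⟩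
  have hA : ∀ l ∈ Λ, A l ∈ Λ' := fun l hl =>
    hHle (show A l ∈ (H : Set V2) from hH ▸ ⟨l, hl, rfl⟩)
  have hcard : {O : Set V2 | (∃ x : V2, O = orbitG Λ x) ∧
      O ⊆ (fun x => A x + b) ⁻¹' orbitG Λ' y}.ncard = (H.addSubgroupOf Λ').index := by
    rw [setOf_orbitG_subset_preimage_eq_range hA hb]
    refine AddSubgroup.ncard_range_eq_index _ fun m m' => ?_
    rw [orbitG_symm_eq_orbitG_symm_iff hA hb hy m.2 m'.2, AddSubgroup.mem_addSubgroupOf, ← hH,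
      AddSubgroup.coe_add, AddSubgroup.coe_neg, neg_add_eq_sub, SetLike.mem_coe]
  have hspan : Submodule.span ℝ (H : Set V2) = ⊤ := by
    rw [hH, ← A.coe_toLinearMap, ← Submodule.map_span, hΛ.2, Submodule.map_top,
      LinearEquiv.range]
  have : DiscreteTopology Λ' := hΛ'.1
  have hindex := AddSubgroup.relIndex_ne_zero_of_span_eq_top hspan hHle
  exact ⟨fun x => orbitG.subset_preimage_of_affine_mem (A := A.toLinearMap) hA hb,
    Set.finite_of_ncard_ne_zero (hcard ▸ hindex), hcard⟩
end

section
/- Let Λ be a lattice in ℝ² with ℤ-basis (λ₁, λ₂). Then the image π_Λ(Λ) of Λ in the orbit space ℝ²/Γ_Λ consists of exactly four points, namely the pairwise distinct points π_Λ(0), π_Λ(λ₁), π_Λ(λ₂), π_Λ(λ₁ + λ₂). -/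
lemma mem_orbit_self (Λ : AddSubgroup V2) (x : V2) : x ∈ orbitG Λ x :=
  ⟨0, Λ.zero_mem, Or.inl (by simp)⟩

lemma orbit_subset (Λ : AddSubgroup V2) {x y m : V2} (hm : m ∈ Λ)
    (h : x = (2:ℝ) • m + y) : orbitG Λ x ⊆ orbitG Λ y := by
  rintro z ⟨l, hl, h1 | h1⟩
  · exact ⟨l + m, Λ.add_mem hl hm, Or.inl (by rw [h1, h]; module)⟩
  · exact ⟨l - m, Λ.sub_mem hl hm, Or.inr (by rw [h1, h]; module)⟩

lemma orbit_eq (Λ : AddSubgroup V2) {x y m : V2} (hm : m ∈ Λ)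
    (h : x = (2:ℝ) • m + y) : orbitG Λ x = orbitG Λ y := by
  refine le_antisymm (orbit_subset Λ hm h) (orbit_subset Λ (Λ.neg_mem hm) ?_)
  rw [h]; module

section
variable (Λ : AddSubgroup V2) (l1 l2 : V2)
  (hind : LinearIndependent ℝ ![l1, l2])
  (hmem : ∀ x : V2, x ∈ Λ ↔ ∃ a b : ℤ, x = a • l1 + b • l2)

include hmem in
lemma orbit_reduce (a b : ℤ) :
    orbitG Λ (a • l1 + b • l2)
      = orbitG Λ ((a % 2 : ℤ) • l1 + (b % 2 : ℤ) • l2) := by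
  have hq : a = 2 * (a / 2) + a % 2 := by omega
  have hq' : b = 2 * (b / 2) + b % 2 := by omega
  refine orbit_eq Λ (m := (a / 2) • l1 + (b / 2) • l2)
    ((hmem _).2 ⟨a / 2, b / 2, rfl⟩) ?_
  have h1 : (a:ℝ) = 2*((a/2 : ℤ):ℝ) + ((a%2 : ℤ):ℝ) := by exact_mod_cast hq
  have h2 : (b:ℝ) = 2*((b/2 : ℤ):ℝ) + ((b%2 : ℤ):ℝ) := by exact_mod_cast hq'
  simp only [← Int.cast_smul_eq_zsmul ℝ]
  rw [h1, h2]
  module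

include hind hmem in
lemma parity_of_orbit_eq {c1 c2 d1 d2 : ℤ}
    (h : orbitG Λ (c1 • l1 + c2 • l2) = orbitG Λ (d1 • l1 + d2 • l2)) :
    c1 % 2 = d1 % 2 ∧ c2 % 2 = d2 % 2 := by
  have hx := mem_orbit_self Λ (c1 • l1 + c2 • l2)
  rw [h] at hx
  obtain ⟨l, hl, h1 | h1⟩ := hx
  · obtain ⟨a, b, rfl⟩ := (hmem l).1 hl
    have key : ((c1:ℝ) - d1 - 2*a) • l1 + ((c2:ℝ) - d2 - 2*b) • l2 = 0 := by
      simp only [← Int.cast_smul_eq_zsmul ℝ] at h1 ⊢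
      linear_combination (norm := module) h1
    obtain ⟨e1, e2⟩ := LinearIndependent.pair_iff.1 hind _ _ key
    constructor
    · have : (c1:ℝ) = d1 + 2*a := by linarith
      have : c1 = d1 + 2*a := by exact_mod_cast this
      omega
    · have : (c2:ℝ) = d2 + 2*b := by linarith
      have : c2 = d2 + 2*b := by exact_mod_cast this
      omega
  · obtain ⟨a, b, rfl⟩ := (hmem l).1 hl
    have key : ((c1:ℝ) + d1 - 2*a) • l1 + ((c2:ℝ) + d2 - 2*b) • l2 = 0 := by
      simp only [← Int.cast_smul_eq_zsmul ℝ] at h1 ⊢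
      linear_combination (norm := module) h1
    obtain ⟨e1, e2⟩ := LinearIndependent.pair_iff.1 hind _ _ key
    constructor
    · have : (c1:ℝ) = -d1 + 2*a := by linarith
      have : c1 = -d1 + 2*a := by exact_mod_cast this
      omega
    · have : (c2:ℝ) = -d2 + 2*b := by linarith
      have : c2 = -d2 + 2*b := by exact_mod_cast this
      omega

end

/-- Let `Λ` be a lattice in ℝ² with ℤ-basis `(λ₁, λ₂)`.  Then the image `π_Λ(Λ)` of `Λ`
in the orbit space `ℝ²/Γ_Λ` consists of exactly four points, namely the pairwise distinct
orbits of `0`, `λ₁`, `λ₂` and `λ₁ + λ₂`. -/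
theorem lattice_image_four_points
    (Λ : AddSubgroup V2) (l1 l2 : V2)
    (hind : LinearIndependent ℝ ![l1, l2])
    (hmem : ∀ x : V2, x ∈ Λ ↔ ∃ a b : ℤ, x = a • l1 + b • l2) :
    (orbitG Λ) '' (Λ : Set V2)
      = {orbitG Λ 0, orbitG Λ l1, orbitG Λ l2, orbitG Λ (l1 + l2)} ∧
    orbitG Λ 0 ≠ orbitG Λ l1 ∧ orbitG Λ 0 ≠ orbitG Λ l2 ∧
    orbitG Λ 0 ≠ orbitG Λ (l1 + l2) ∧ orbitG Λ l1 ≠ orbitG Λ l2 ∧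
    orbitG Λ l1 ≠ orbitG Λ (l1 + l2) ∧ orbitG Λ l2 ≠ orbitG Λ (l1 + l2) := by
  have e0 : ((0:ℤ) • l1 + (0:ℤ) • l2 : V2) = 0 := by simp
  have e1 : ((1:ℤ) • l1 + (0:ℤ) • l2 : V2) = l1 := by simp
  have e2 : ((0:ℤ) • l1 + (1:ℤ) • l2 : V2) = l2 := by simp
  have e3 : ((1:ℤ) • l1 + (1:ℤ) • l2 : V2) = l1 + l2 := by simp
  have par : ∀ c1 c2 d1 d2 : ℤ, ∀ x y : V2, (c1 • l1 + c2 • l2 : V2) = x →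
      (d1 • l1 + d2 • l2 : V2) = y → orbitG Λ x = orbitG Λ y →
      c1 % 2 = d1 % 2 ∧ c2 % 2 = d2 % 2 := by
    rintro c1 c2 d1 d2 x y rfl rfl h
    exact parity_of_orbit_eq Λ l1 l2 hind hmem h
  refine ⟨?_, fun h => by simpa using (par 0 0 1 0 _ _ e0 e1 h).1,
    fun h => by simpa using (par 0 0 0 1 _ _ e0 e2 h).2,
    fun h => by simpa using (par 0 0 1 1 _ _ e0 e3 h).1,
    fun h => by simpa using (par 1 0 0 1 _ _ e1 e2 h).1,
    fun h => by simpa using (par 1 0 1 1 _ _ e1 e3 h).2,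
    fun h => by simpa using (par 0 1 1 1 _ _ e2 e3 h).1⟩
  ext o
  simp only [Set.mem_image, SetLike.mem_coe, Set.mem_insert_iff, Set.mem_singleton_iff]
  constructor
  · rintro ⟨x, hx, rfl⟩
    obtain ⟨a, b, rfl⟩ := (hmem x).1 hx
    have hred := orbit_reduce Λ l1 l2 hmem a b
    have ha : a % 2 = 0 ∨ a % 2 = 1 := by omega
    have hb : b % 2 = 0 ∨ b % 2 = 1 := by omega
    rcases ha with ha | ha <;> rcases hb with hb | hb <;>
      rw [ha, hb] at hred <;>
      [rw [e0] at hred; rw [e2] at hred; rw [e1] at hred; rw [e3] at hred] <;>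
      tauto
  · rintro (rfl | rfl | rfl | rfl)
    · exact ⟨0, Λ.zero_mem, rfl⟩
    · exact ⟨l1, (hmem l1).2 ⟨1, 0, by simp⟩, rfl⟩
    · exact ⟨l2, (hmem l2).2 ⟨0, 1, by simp⟩, rfl⟩
    · exact ⟨l1 + l2, (hmem _).2 ⟨1, 1, by simp⟩, rfl⟩
end

section
/- Let Λ be a lattice in ℝ² with ℤ-basis (λ₁, λ₂), and let F be the closed parallelogram F = {2sλ₁ + tλ₂ : s, t ∈ [0,1]} (the parallelogram with corners 0, 2λ₁, λ₂, 2λ₁ + λ₂). Then every Γ_Λ-orbit in ℝ² contains a point of F; that is, π_Λ restricted to F is surjective onto ℝ²/Γ_Λ. -/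
lemma key_s (a : ℝ) : ∃ (s : ℝ) (m : ℤ), s ∈ Set.Icc (0:ℝ) 1 ∧ 2 * s = a + 2 * m := by
  refine ⟨Int.fract (a / 2), -⌊a / 2⌋, ⟨Int.fract_nonneg _, (Int.fract_lt_one _).le⟩, ?_⟩
  have := Int.fract_add_floor (a / 2)
  push_cast
  rw [Int.fract]
  ring

lemma key_t (b : ℝ) : ∃ (t : ℝ) (n : ℤ), t ∈ Set.Icc (0:ℝ) 1 ∧
    (t = b + 2 * n ∨ t = -b + 2 * n) := by
  rcases le_or_gt (Int.fract (b / 2)) (1 / 2) with h | h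
  · refine ⟨2 * Int.fract (b / 2), -⌊b / 2⌋, ⟨mul_nonneg (by norm_num) (Int.fract_nonneg _), by linarith⟩, Or.inl ?_⟩
    rw [Int.fract]; push_cast; ring
  · refine ⟨2 * (1 - Int.fract (b / 2)), ⌊b / 2⌋ + 1,
      ⟨by nlinarith [Int.fract_lt_one (b / 2)], by linarith⟩, Or.inr ?_⟩
    rw [Int.fract]; push_cast; ring

/-- Let `Λ` be a lattice in ℝ² with ℤ-basis `(λ₁, λ₂)` and let `F` be the closed
parallelogram `{2sλ₁ + tλ₂ : s, t ∈ [0,1]}` with corners `0, 2λ₁, λ₂, 2λ₁ + λ₂`.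
Then every `Γ_Λ`-orbit contains a point of `F`. -/
theorem fundamental_parallelogram_surjective
    (Λ : AddSubgroup V2) (l1 l2 : V2)
    (hind : LinearIndependent ℝ ![l1, l2])
    (hmem : ∀ x : V2, x ∈ Λ ↔ ∃ a b : ℤ, x = a • l1 + b • l2)
    (x : V2) :
    ∃ s t : ℝ, s ∈ Set.Icc (0:ℝ) 1 ∧ t ∈ Set.Icc (0:ℝ) 1 ∧
      (2 * s) • l1 + t • l2 ∈ orbitG Λ x := by
  -- write x in the basis (l1, l2)
  obtain ⟨a, b, hx⟩ : ∃ a b : ℝ, x = a • l1 + b • l2 := by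
    have hsp : Submodule.span ℝ (Set.range ![l1, l2]) = ⊤ := by
      apply hind.span_eq_top_of_card_eq_finrank
      simp [finrank_euclideanSpace_fin]
    have hx : x ∈ Submodule.span ℝ (Set.range ![l1, l2]) := by rw [hsp]; trivial
    rw [Submodule.mem_span_range_iff_exists_fun ℝ] at hx
    obtain ⟨c, hc⟩ := hx
    exact ⟨c 0, c 1, by rw [← hc, Fin.sum_univ_two]; rfl⟩
  obtain ⟨t, n, ht01, ht⟩ := key_t b
  rcases ht with ht | ht
  · -- use the translation by m l1 + n l2 and the + sign
    obtain ⟨s, m, hs01, hs⟩ := key_s a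
    refine ⟨s, t, hs01, ht01, ⟨(m : ℝ) • l1 + (n : ℝ) • l2, ?_, Or.inl ?_⟩⟩
    · exact (hmem _).2 ⟨m, n, by rw [Int.cast_smul_eq_zsmul, Int.cast_smul_eq_zsmul]⟩
    · rw [hx, hs, ht]; module
  · -- use the reflection through m l1 + n l2
    obtain ⟨s, m, hs01, hs⟩ := key_s (-a)
    refine ⟨s, t, hs01, ht01, ⟨(m : ℝ) • l1 + (n : ℝ) • l2, ?_, Or.inr ?_⟩⟩
    · exact (hmem _).2 ⟨m, n, by rw [Int.cast_smul_eq_zsmul, Int.cast_smul_eq_zsmul]⟩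
    · rw [hx, hs, ht]; module
end

section
/- Let Λ be a lattice in ℝ² with ℤ-basis (λ₁, λ₂), and let U = {2sλ₁ + tλ₂ : s, t ∈ (0,1)} be the open parallelogram with corners 0, 2λ₁, λ₂, 2λ₁ + λ₂. Then π_Λ is injective on U: if x, x' ∈ U lie in the same Γ_Λ-orbit, then x = x'. -/
open Set

lemma eq_of_eq_intCast_add_of_mem_Ioo {s s' : ℝ} {n : ℤ} (hs : s ∈ Ioo 0 1)
    (hs' : s' ∈ Ioo 0 1) (h : s' = n + s) : s' = s := by
  have hn_real : (-1 : ℝ) < n ∧ (n : ℝ) < 1 := by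
    constructor <;> linarith [hs.1, hs.2, hs'.1, hs'.2]
  have hn : (-1 : ℤ) < n ∧ n < 1 := by exact_mod_cast hn_real
  obtain rfl : n = 0 := by omega
  simpa using h

lemma add_ne_two_mul_intCast_of_mem_Ioo {t t' : ℝ} (ht : t ∈ Ioo 0 1) (ht' : t' ∈ Ioo 0 1)
    (b : ℤ) : t + t' ≠ 2 * b := by
  intro h
  have hb_real : (0 : ℝ) < b ∧ (b : ℝ) < 1 := by
    constructor <;> linarith [ht.1, ht.2, ht'.1, ht'.2]
  have hb : (0 : ℤ) < b ∧ b < 1 := by exact_mod_cast hb_real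
  omega

/-- Let `Λ` be a lattice in ℝ² with ℤ-basis `(λ₁, λ₂)` and let
`U = {2sλ₁ + tλ₂ : s, t ∈ (0,1)}` be the open parallelogram with corners
`0, 2λ₁, λ₂, 2λ₁ + λ₂`.  Then `π_Λ` is injective on `U`: if `x, x' ∈ U` lie in the same
`Γ_Λ`-orbit, then `x = x'`. -/
theorem open_parallelogram_injective
    (Λ : AddSubgroup V2) (l1 l2 : V2)
    (hind : LinearIndependent ℝ ![l1, l2])
    (hmem : ∀ x : V2, x ∈ Λ ↔ ∃ a b : ℤ, x = a • l1 + b • l2)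
    (x x' : V2)
    (hx : ∃ s t : ℝ, s ∈ Set.Ioo (0:ℝ) 1 ∧ t ∈ Set.Ioo (0:ℝ) 1 ∧
      x = (2 * s) • l1 + t • l2)
    (hx' : ∃ s t : ℝ, s ∈ Set.Ioo (0:ℝ) 1 ∧ t ∈ Set.Ioo (0:ℝ) 1 ∧
      x' = (2 * s) • l1 + t • l2)
    (horb : x' ∈ orbitG Λ x) :
    x = x' := by
  obtain ⟨s, t, hs, ht, rfl⟩ := hx
  obtain ⟨s', t', hs', ht', rfl⟩ := hx'
  obtain ⟨l, hl, hl_cases⟩ := horb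
  obtain ⟨a, b, rfl⟩ := (hmem l).1 hl
  simp only [← Int.cast_smul_eq_zsmul ℝ] at hl_cases
  rcases hl_cases with htrans | hrefl
  · obtain ⟨hu, hv⟩ := hind.eq_of_pair (s' := 2 * a + 2 * s) (t' := 2 * b + t)
      (by rw [htrans]; module)
    rw [eq_of_eq_intCast_add_of_mem_Ioo (n := a) hs hs' (by linarith),
      eq_of_eq_intCast_add_of_mem_Ioo (n := 2 * b) ht ht' (by push_cast; linarith)]
  · obtain ⟨-, hv⟩ := hind.eq_of_pair (s' := 2 * a - 2 * s) (t' := 2 * b - t)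
      (by rw [hrefl]; module)
    exact absurd (by linarith) (add_ne_two_mul_intCast_of_mem_Ioo ht ht' b)
end

section
/- Let Λ be a lattice in ℝ² with ℤ-basis (λ₁, λ₂). Let D ⊆ [0,1] × [0,1] be the set D = ((0,1) × (0,1)) ∪ ([0,1/2] × {0}) ∪ ([0,1/2] × {1}) ∪ ({0} × [0,1]), and let T = {2sλ₁ + tλ₂ : (s,t) ∈ D} (the union of the interior of the fundamental parallelogram with corners 0, 2λ₁, λ₂, 2λ₁ + λ₂ and the 'left half' of its boundary). Then T contains exactly one point of each Γ_Λ-orbit; that is, π_Λ restricted to T is a bijection onto ℝ²/Γ_Λ. -/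
open Set

/-- The parameter set
`D = ((0,1) × (0,1)) ∪ ([0,1/2] × {0}) ∪ ([0,1/2] × {1}) ∪ ({0} × [0,1]) ⊆ [0,1] × [0,1]`. -/
def Dset : Set (ℝ × ℝ) :=
  (Ioo (0:ℝ) 1 ×ˢ Ioo (0:ℝ) 1) ∪ (Icc (0:ℝ) (1/2) ×ˢ {(0:ℝ)}) ∪
    (Icc (0:ℝ) (1/2) ×ˢ {(1:ℝ)}) ∪ ({(0:ℝ)} ×ˢ Icc (0:ℝ) 1)

/-!
In the coordinates `(s, t)` of `2sλ₁ + tλ₂`, `Γ_Λ` acts by `(s, t) ↦ (±s + a, ±t + 2b)` with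
`a, b ∈ ℤ`. Translating `t` by `2ℤ` and, if needed, reflecting brings `t` into `[0, 1]`;
translating `s` by `ℤ` brings `s` into `[0, 1)`; on the edges `t = 0` and `t = 1` the element
`(s, t) ↦ (1 - s, t)` of `Γ_Λ` brings `s` into `[0, 1/2]`. Conversely, two points of `D` in one
orbit coincide: a translation moves `s` by an integer and `t` by an even integer, and a
reflection maps a point of `D` into `D` only on those two edges, where it identifies `s` with
`1 - s` or `-s`.
-/

lemma mem_Dset_iff {s t : ℝ} :
    (s, t) ∈ Dset ↔ 0 ≤ s ∧ s < 1 ∧ 0 ≤ t ∧ t ≤ 1 ∧ (t = 0 ∨ t = 1 → s ≤ 1 / 2) := by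
  simp only [Dset, mem_union, mem_prod, mem_Ioo, mem_Icc, mem_singleton_iff]
  constructor
  · rintro (((⟨⟨h1, h2⟩, h3, h4⟩ | ⟨⟨h1, h2⟩, rfl⟩) | ⟨⟨h1, h2⟩, rfl⟩) | ⟨rfl, h3, h4⟩)
    all_goals refine ⟨by linarith, by linarith, by linarith, by linarith, ?_⟩
    all_goals rintro (h | h) <;> linarith
  · rintro ⟨hs0, hs1, ht0, ht1, hedge⟩
    by_cases hedge' : t = 0 ∨ t = 1
    · have := hedge hedge'
      rcases hedge' with rfl | rfl
      · exact Or.inl (Or.inl (Or.inr ⟨⟨hs0, this⟩, rfl⟩))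
      · exact Or.inl (Or.inr ⟨⟨hs0, this⟩, rfl⟩)
    · rw [not_or] at hedge'
      rcases hs0.eq_or_lt with rfl | hs0
      · exact Or.inr ⟨rfl, ht0, ht1⟩
      · exact Or.inl (Or.inl (Or.inl ⟨⟨hs0, hs1⟩, ht0.lt_of_ne' hedge'.1, ht1.lt_of_ne hedge'.2⟩))

/-- The orbit relation of `Γ_Λ` in the coordinates `(s, t)` of `2sλ₁ + tλ₂`: for
`λ = aλ₁ + bλ₂`, the map `x ↦ 2λ ± x` becomes `(s, t) ↦ (±s + a, ±t + 2b)`. -/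
def GammaRel (p q : ℝ × ℝ) : Prop :=
  ∃ a b : ℤ, p = (q.1 + a, q.2 + 2 * b) ∨ p = (a - q.1, 2 * b - q.2)

theorem gammaRel_equivalence : Equivalence GammaRel where
  refl p := ⟨0, 0, Or.inl (by simp)⟩
  symm := by
    rintro p q ⟨a, b, rfl | rfl⟩
    · exact ⟨-a, -b, Or.inl (by ext <;> push_cast <;> ring)⟩
    · exact ⟨a, b, Or.inr (by ext <;> simp)⟩
  trans := by
    rintro p q r ⟨a, b, rfl | rfl⟩ ⟨c, d, rfl | rfl⟩
    · exact ⟨c + a, d + b, Or.inl (by ext <;> push_cast <;> ring)⟩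
    · exact ⟨c + a, d + b, Or.inr (by ext <;> push_cast <;> ring)⟩
    · exact ⟨a - c, b - d, Or.inr (by ext <;> push_cast <;> ring)⟩
    · exact ⟨a - c, b - d, Or.inl (by ext <;> push_cast <;> ring)⟩

lemma gammaRel_translate (p : ℝ × ℝ) (a b : ℤ) : GammaRel (p.1 + a, p.2 + 2 * b) p :=
  ⟨a, b, Or.inl rfl⟩

lemma gammaRel_reflect (p : ℝ × ℝ) (a b : ℤ) : GammaRel (a - p.1, 2 * b - p.2) p :=
  ⟨a, b, Or.inr rfl⟩

lemma exists_gammaRel_snd_mem_Icc (q : ℝ × ℝ) : ∃ p, GammaRel p q ∧ 0 ≤ p.2 ∧ p.2 ≤ 1 := by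
  set b := ⌊q.2 / 2⌋
  have hb₀ : (b : ℝ) ≤ q.2 / 2 := Int.floor_le _
  have hb₁ : q.2 / 2 < b + 1 := Int.lt_floor_add_one _
  rcases le_or_gt (q.2 - 2 * b) 1 with h | h
  · exact ⟨_, by simpa using gammaRel_translate q 0 (-b), by push_cast; linarith,
      by push_cast; linarith⟩
  · exact ⟨_, gammaRel_reflect q 0 (b + 1), by push_cast; linarith, by push_cast; linarith⟩

lemma exists_gammaRel_fst_mem_Ico (q : ℝ × ℝ) :
    ∃ s, 0 ≤ s ∧ s < 1 ∧ GammaRel (s, q.2) q := by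
  refine ⟨Int.fract q.1, Int.fract_nonneg _, Int.fract_lt_one _, ?_⟩
  convert gammaRel_translate q (-⌊q.1⌋) 0 using 2 <;> simp [Int.fract, sub_eq_add_neg]

lemma exists_mem_Dset_gammaRel (q : ℝ × ℝ) : ∃ p ∈ Dset, GammaRel p q := by
  obtain ⟨⟨u, t⟩, hq₁, ht₀, ht₁⟩ := exists_gammaRel_snd_mem_Icc q
  obtain ⟨s, hs₀, hs₁, hq₂⟩ := exists_gammaRel_fst_mem_Ico (u, t)
  have hq := gammaRel_equivalence.trans hq₂ hq₁
  by_cases h : (t = 0 ∨ t = 1) ∧ 1 / 2 < s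
  · obtain ⟨b, rfl⟩ : ∃ b : ℤ, t = b := h.1.elim (fun h ↦ ⟨0, by simp [h]⟩) (fun h ↦ ⟨1, by simp [h]⟩)
    -- the reflection `(s, t) ↦ (1 - s, 2t - t)` fixes the edges `t = 0` and `t = 1`
    refine ⟨(1 - s, b), mem_Dset_iff.2 ⟨by linarith, by linarith, ht₀, ht₁, fun _ ↦ by linarith⟩,
      gammaRel_equivalence.trans ?_ hq⟩
    convert gammaRel_reflect (s, (b : ℝ)) 1 b using 2 <;> push_cast <;> ring
  · refine ⟨(s, t), mem_Dset_iff.2 ⟨hs₀, hs₁, ht₀, ht₁, fun ht ↦ ?_⟩, hq⟩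
    exact not_lt.1 fun hs ↦ h ⟨ht, hs⟩

lemma GammaRel.eq_of_mem_Dset {p q : ℝ × ℝ} (hp : p ∈ Dset) (hq : q ∈ Dset) (h : GammaRel p q) :
    p = q := by
  obtain ⟨s, t⟩ := p
  obtain ⟨u, v⟩ := q
  obtain ⟨hu₀, hu₁, hv₀, hv₁, huv⟩ := mem_Dset_iff.1 hq
  obtain ⟨a, b, h | h⟩ := h <;> simp only [Prod.mk.injEq] at h ⊢ <;> obtain ⟨rfl, rfl⟩ := h <;>
    obtain ⟨hs₀, hs₁, ht₀, ht₁, hst⟩ := mem_Dset_iff.1 hp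
  · have ha : a = 0 := Int.abs_lt_one_iff.1 <| by
      exact_mod_cast (abs_lt.2 ⟨by linarith, by linarith⟩ : |(a : ℝ)| < 1)
    have hb : b = 0 := Int.abs_lt_one_iff.1 <| by
      exact_mod_cast (abs_lt.2 ⟨by linarith, by linarith⟩ : |(b : ℝ)| < 1)
    simp [ha, hb]
  · -- `t + v = 2b` forces `t = v ∈ {0, 1}`, and then `s + u = a` with `s, u ≤ 1/2` forces `s = u`
    have hb : b = 0 ∨ b = 1 := by
      have : 0 ≤ b := by exact_mod_cast (by linarith : (0 : ℝ) ≤ b)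
      have : b ≤ 1 := by exact_mod_cast (by linarith : (b : ℝ) ≤ 1)
      omega
    have hv : 2 * (b : ℝ) - v = v ∧ (v = 0 ∨ v = 1) := by
      rcases hb with rfl | rfl
      · exact ⟨by push_cast at ht₀ ⊢; linarith, Or.inl (by push_cast at ht₀; linarith)⟩
      · exact ⟨by push_cast at ht₁ ⊢; linarith, Or.inr (by push_cast at ht₁; linarith)⟩
    have hs : a - u ≤ 1 / 2 := hst (by rw [hv.1]; exact hv.2)
    have hu : u ≤ 1 / 2 := huv hv.2
    have ha : a = 0 ∨ a = 1 := by
      have : 0 ≤ a := by exact_mod_cast (by linarith : (0 : ℝ) ≤ a)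
      have : a ≤ 1 := by exact_mod_cast (by linarith : (a : ℝ) ≤ 1)
      omega
    refine ⟨?_, hv.1⟩
    rcases ha with rfl | rfl <;> push_cast at hs₀ hs ⊢ <;> linarith

section ofCoords

variable {E : Type*} [AddCommGroup E] [Module ℝ E] {l1 l2 : E}

def ofCoords (l1 l2 : E) (p : ℝ × ℝ) : E := (2 * p.1) • l1 + p.2 • l2

lemma ofCoords_injective (hind : LinearIndependent ℝ ![l1, l2]) :
    Function.Injective (ofCoords l1 l2) := by
  intro p q h
  obtain ⟨h₁, h₂⟩ := hind.eq_of_pair h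
  exact Prod.ext (by linarith) h₂

lemma ofCoords_surjective (hind : LinearIndependent ℝ ![l1, l2]) (hE : Module.finrank ℝ E = 2) :
    Function.Surjective (ofCoords l1 l2) := by
  intro x
  have hspan := hind.span_eq_top_of_card_eq_finrank (by simp [hE])
  rw [Matrix.range_cons_cons_empty] at hspan
  obtain ⟨a, b, hab⟩ := Submodule.mem_span_pair.1 (hspan ▸ Submodule.mem_top : x ∈ _)
  exact ⟨(a / 2, b), by rw [← hab, ofCoords]; ring_nf⟩

lemma ofCoords_translate (p : ℝ × ℝ) (a b : ℤ) :
    ofCoords l1 l2 (p.1 + a, p.2 + 2 * b) = (2 : ℝ) • (a • l1 + b • l2) + ofCoords l1 l2 p := by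
  simp only [ofCoords, ← Int.cast_smul_eq_zsmul ℝ]
  module

lemma ofCoords_reflect (p : ℝ × ℝ) (a b : ℤ) :
    ofCoords l1 l2 (a - p.1, 2 * b - p.2) = (2 : ℝ) • (a • l1 + b • l2) - ofCoords l1 l2 p := by
  simp only [ofCoords, ← Int.cast_smul_eq_zsmul ℝ]
  module

end ofCoords

section orbit

variable {Λ : AddSubgroup V2} {l1 l2 : V2}

lemma ofCoords_mem_orbitG_iff (hind : LinearIndependent ℝ ![l1, l2])
    (hmem : ∀ x : V2, x ∈ Λ ↔ ∃ a b : ℤ, x = a • l1 + b • l2) (p q : ℝ × ℝ) :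
    ofCoords l1 l2 p ∈ orbitG Λ (ofCoords l1 l2 q) ↔ GammaRel p q := by
  simp only [orbitG, mem_ofPred_eq, GammaRel]
  constructor
  · rintro ⟨l, hl, h⟩
    obtain ⟨a, b, rfl⟩ := (hmem l).1 hl
    refine ⟨a, b, ?_⟩
    rwa [← ofCoords_translate, ← ofCoords_reflect, (ofCoords_injective hind).eq_iff,
      (ofCoords_injective hind).eq_iff] at h
  · rintro ⟨a, b, h⟩
    refine ⟨a • l1 + b • l2, (hmem _).2 ⟨a, b, rfl⟩, ?_⟩
    rwa [← ofCoords_translate, ← ofCoords_reflect, (ofCoords_injective hind).eq_iff,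
      (ofCoords_injective hind).eq_iff]

lemma orbitG_ofCoords_eq_iff (hind : LinearIndependent ℝ ![l1, l2])
    (hmem : ∀ x : V2, x ∈ Λ ↔ ∃ a b : ℤ, x = a • l1 + b • l2) (p q : ℝ × ℝ) :
    orbitG Λ (ofCoords l1 l2 p) = orbitG Λ (ofCoords l1 l2 q) ↔ GammaRel p q := by
  refine ⟨fun h ↦ ?_, fun h ↦ ?_⟩
  · rw [← ofCoords_mem_orbitG_iff hind hmem, ← h, ofCoords_mem_orbitG_iff hind hmem]
    exact gammaRel_equivalence.refl p
  · ext y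
    obtain ⟨r, rfl⟩ := ofCoords_surjective hind finrank_euclideanSpace_fin y
    simp only [ofCoords_mem_orbitG_iff hind hmem]
    exact ⟨fun hr ↦ gammaRel_equivalence.trans hr h,
      fun hr ↦ gammaRel_equivalence.trans hr (gammaRel_equivalence.symm h)⟩

end orbit

/-- Let `Λ` be a lattice in ℝ² with ℤ-basis `(λ₁, λ₂)`, and let
`T = {2sλ₁ + tλ₂ : (s,t) ∈ D}` be the union of the interior of the fundamental
parallelogram with corners `0, 2λ₁, λ₂, 2λ₁ + λ₂` and the "left half" of its boundary.
Then `T` contains exactly one point of each `Γ_Λ`-orbit, i.e. `π_Λ` restricted to `T` is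
a bijection onto `ℝ²/Γ_Λ`. -/
theorem half_open_fundamental_domain_bijective
    (Λ : AddSubgroup V2) (l1 l2 : V2)
    (hind : LinearIndependent ℝ ![l1, l2])
    (hmem : ∀ x : V2, x ∈ Λ ↔ ∃ a b : ℤ, x = a • l1 + b • l2)
    (x : V2) :
    ∃! y : V2, (∃ p ∈ Dset, y = (2 * p.1) • l1 + p.2 • l2) ∧
      orbitG Λ y = orbitG Λ x := by
  obtain ⟨q, rfl⟩ := ofCoords_surjective hind finrank_euclideanSpace_fin x
  obtain ⟨p, hpD, hpq⟩ := exists_mem_Dset_gammaRel q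
  refine ⟨ofCoords l1 l2 p, ⟨⟨p, hpD, rfl⟩, (orbitG_ofCoords_eq_iff hind hmem p q).2 hpq⟩, ?_⟩
  rintro _ ⟨⟨p', hp'D, rfl⟩, hp'q⟩
  have hp'p : GammaRel p' p :=
    gammaRel_equivalence.trans ((orbitG_ofCoords_eq_iff hind hmem p' q).1 hp'q)
      (gammaRel_equivalence.symm hpq)
  exact congrArg (ofCoords l1 l2) (hp'p.eq_of_mem_Dset hp'D hpD)
end
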